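/- Let (Ω, 𝓕, ℙ) be a probability space and E a real normed vector space. Fix θ₀ ∈ E, a finite index set of tasks, and for each task j a random task vector τⱼ : Ω → E of the form τⱼ = Σ_{t=0}^{T−1} (−η · g_t^{(j)}), where η > 0 is a learning rate, T is the number of gradient steps, and the random vectors g_t^{(j)} satisfy 𝔼[‖g_t^{(j)}‖²] ≤ G² for all t and j with G > 0. Fix a task i and let Lᵢ : E → ℝ be Cᵢ-Lipschitz continuous for some Cᵢ ≥ 0. Given merging coefficients (αⱼ)ⱼ ∈ ℝ, set τ_m = Σⱼ αⱼ τⱼ and define Ψⱼⁱ = Cᵢ·|αⱼ| for j ≠ i and Ψᵢⁱ = Cᵢ·|1 − αᵢ|. Then 𝔼[|Lᵢ(θ₀ + τ_m) − Lᵢ(θ₀ + τᵢ)|] ≤ (Σⱼ Ψⱼⁱ) · G · η · T; in particular the expected loss gap of the merged model on task i is O(ηT). -/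

import Mathlib

open MeasureTheory

/-!
Pointwise, `θ₀ + τ_m - (θ₀ + τ i) = ∑ j, (α j - δ_{ij}) • τ j`, so the Lipschitz bound gives
`|L (θ₀ + τ_m) - L (θ₀ + τ i)| ≤ ∑ j, Ψ j * ‖τ j‖`. Each `‖τ j‖` is at most `η ∑ t, ‖g j t‖`,
and by Jensen `𝔼‖g j t‖ ≤ √𝔼‖g j t‖² ≤ G`; taking expectations gives the bound.
-/

section Expectation

variable {Ω E κ : Type*} [MeasurableSpace Ω] {μ : Measure Ω} [IsProbabilityMeasure μ]
  [NormedAddCommGroup E]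

theorem integral_norm_le_of_integral_norm_sq_le {f : Ω → E} {G : ℝ} (hf : MemLp f 2 μ)
    (hG : 0 ≤ G) (hbound : ∫ ω, ‖f ω‖ ^ 2 ∂μ ≤ G ^ 2) :
    ∫ ω, ‖f ω‖ ∂μ ≤ G := by
  -- `Var ‖f‖ ≥ 0` is Jensen's inequality `(𝔼‖f‖)² ≤ 𝔼‖f‖²`.
  have hvar := ProbabilityTheory.variance_nonneg (fun ω => ‖f ω‖) μ
  rw [ProbabilityTheory.variance_eq_sub hf.norm] at hvar
  simp only [Pi.pow_apply] at hvar
  exact abs_le_of_sq_le_sq' (by linarith) hG |>.2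

theorem integral_norm_sum_smul_le [NormedSpace ℝ E] {s : Finset κ} {g : κ → Ω → E} {G : ℝ}
    (c : ℝ) (hg : ∀ t ∈ s, MemLp (g t) 2 μ) (hG : 0 ≤ G)
    (hbound : ∀ t ∈ s, ∫ ω, ‖g t ω‖ ^ 2 ∂μ ≤ G ^ 2) :
    ∫ ω, ‖∑ t ∈ s, c • g t ω‖ ∂μ ≤ |c| * s.card * G := by
  have hgint : ∀ t ∈ s, Integrable (fun ω => ‖g t ω‖) μ := fun t ht =>
    ((hg t ht).integrable one_le_two).norm
  calc ∫ ω, ‖∑ t ∈ s, c • g t ω‖ ∂μ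
      ≤ ∫ ω, |c| * ∑ t ∈ s, ‖g t ω‖ ∂μ := by
        refine integral_mono_of_nonneg (.of_forall fun _ => norm_nonneg _)
          ((integrable_finsetSum s hgint).const_mul _) (.of_forall fun ω => ?_)
        dsimp only
        rw [← Finset.smul_sum, norm_smul, Real.norm_eq_abs]
        gcongr
        exact norm_sum_le _ _
    _ = |c| * ∑ t ∈ s, ∫ ω, ‖g t ω‖ ∂μ := by
        rw [integral_const_mul, integral_finsetSum s hgint]
    _ ≤ |c| * ∑ _t ∈ s, G := by
        gcongr with t ht
        exact integral_norm_le_of_integral_norm_sq_le (hg t ht) hG (hbound t ht)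
    _ = |c| * s.card * G := by
        rw [Finset.sum_const, nsmul_eq_mul, mul_assoc]

end Expectation

section Merging

variable {E ι : Type*} [NormedAddCommGroup E] [NormedSpace ℝ E] [Fintype ι] [DecidableEq ι]

theorem sum_smul_sub_eq_sum_sub_ite_smul (α : ι → ℝ) (v : ι → E) (i : ι) :
    ∑ j, α j • v j - v i = ∑ j, (α j - if j = i then 1 else 0) • v j := by
  simp only [sub_smul, Finset.sum_sub_distrib, ite_smul, one_smul, zero_smul,
    Finset.sum_ite_eq', Finset.mem_univ, if_true]

theorem norm_sum_smul_sub_le (α : ι → ℝ) (v : ι → E) (i : ι) :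
    ‖∑ j, α j • v j - v i‖ ≤ ∑ j, (if j = i then |1 - α j| else |α j|) * ‖v j‖ := by
  rw [sum_smul_sub_eq_sum_sub_ite_smul]
  refine (norm_sum_le _ _).trans_eq (Finset.sum_congr rfl fun j _ => ?_)
  rw [norm_smul, Real.norm_eq_abs]
  split_ifs <;> simp [abs_sub_comm]

theorem abs_sub_le_sum_mul_norm_of_lipschitz {L : E → ℝ} {C : ℝ} (hC : 0 ≤ C)
    (hLip : ∀ Θ Θ' : E, |L Θ - L Θ'| ≤ C * ‖Θ - Θ'‖) (θ₀ : E) (α : ι → ℝ) (v : ι → E) (i : ι) :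
    |L (θ₀ + ∑ j, α j • v j) - L (θ₀ + v i)| ≤
      ∑ j, (if j = i then C * |1 - α j| else C * |α j|) * ‖v j‖ :=
  calc _ ≤ C * ‖∑ j, α j • v j - v i‖ := by
        simpa only [add_sub_add_left_eq_sub] using hLip (θ₀ + ∑ j, α j • v j) (θ₀ + v i)
    _ ≤ C * ∑ j, (if j = i then |1 - α j| else |α j|) * ‖v j‖ := by
        gcongr
        exact norm_sum_smul_sub_le α v i
    _ = ∑ j, (if j = i then C * |1 - α j| else C * |α j|) * ‖v j‖ := by
        simp only [Finset.mul_sum, ← mul_assoc, mul_ite]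

end Merging

/-- **Theorem 1 (expected loss gap of model merging is `O(ηT)`).**
On a probability space `Ω`, fix a base parameter `θ₀` in a real normed vector space `E`
and, for each task `j` in a finite index set, a random task vector
`τ j = ∑ t, (-η) • g j t` built from `T` stochastic gradient steps with learning rate
`η > 0`, where the stochastic gradients satisfy `𝔼[‖g j t‖²] ≤ G²` (`G > 0`).
Fix a task `i` and let `L : E → ℝ` be `C`-Lipschitz (`C ≥ 0`). With merging
coefficients `α j`, merged vector `τ_m = ∑ j, α j • τ j`, and sensitivity coefficients
`Ψ j = C * |α j|` for `j ≠ i`, `Ψ i = C * |1 - α i|`, we have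
`𝔼[|L (θ₀ + τ_m) - L (θ₀ + τ i)|] ≤ (∑ j, Ψ j) * G * η * T`. -/
theorem expected_merged_loss_gap_le
    {Ω : Type*} [MeasureSpace Ω] [IsProbabilityMeasure (volume : Measure Ω)]
    {E : Type*} [NormedAddCommGroup E] [NormedSpace ℝ E]
    {ι : Type*} [Fintype ι] [DecidableEq ι]
    (θ₀ : E) (T : ℕ) (η : ℝ) (hη : 0 < η)
    (g : ι → Fin T → Ω → E) (G : ℝ) (hG : 0 < G)
    (hmeas : ∀ j t, AEStronglyMeasurable (g j t) (volume : Measure Ω))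
    (hint : ∀ j t, Integrable (fun ω => ‖g j t ω‖ ^ 2) (volume : Measure Ω))
    (hbound : ∀ j t, (∫ ω, ‖g j t ω‖ ^ 2) ≤ G ^ 2)
    (τ : ι → Ω → E) (hτ : ∀ j ω, τ j ω = ∑ t : Fin T, (-η) • g j t ω)
    (i : ι) (L : E → ℝ) (C : ℝ) (hC : 0 ≤ C)
    (hLip : ∀ Θ Θ' : E, |L Θ - L Θ'| ≤ C * ‖Θ - Θ'‖)
    (α : ι → ℝ) :
    (∫ ω, |L (θ₀ + ∑ j, α j • τ j ω) - L (θ₀ + τ i ω)|) ≤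
      (∑ j, if j = i then C * |1 - α j| else C * |α j|) * G * η * (T : ℝ) := by
  set Ψ : ι → ℝ := fun j => if j = i then C * |1 - α j| else C * |α j|
  have hΨ : ∀ j, 0 ≤ Ψ j := fun j => by dsimp only [Ψ]; split_ifs <;> positivity
  have hg : ∀ j t, MemLp (g j t) 2 volume := fun j t =>
    (memLp_two_iff_integrable_sq_norm (hmeas j t)).2 (hint j t)
  have hτ_eq : ∀ j, τ j = fun ω => ∑ t : Fin T, (-η) • g j t ω := fun j => funext (hτ j)
  have hτ_int : ∀ j, Integrable (fun ω => ‖τ j ω‖) := fun j => by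
    rw [hτ_eq]
    exact (integrable_finsetSum _ fun t _ => ((hg j t).integrable one_le_two).smul (-η)).norm
  have hτ_exp : ∀ j, ∫ ω, ‖τ j ω‖ ≤ η * T * G := fun j => by
    simpa [hτ_eq, abs_of_pos hη] using
      integral_norm_sum_smul_le (s := Finset.univ) (-η) (fun t _ => hg j t) hG.le
        (fun t _ => hbound j t)
  have hgap : ∀ ω, |L (θ₀ + ∑ j, α j • τ j ω) - L (θ₀ + τ i ω)| ≤ ∑ j, Ψ j * ‖τ j ω‖ :=
    fun ω => abs_sub_le_sum_mul_norm_of_lipschitz hC hLip θ₀ α (τ · ω) i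
  calc (∫ ω, |L (θ₀ + ∑ j, α j • τ j ω) - L (θ₀ + τ i ω)|)
      ≤ ∫ ω, ∑ j, Ψ j * ‖τ j ω‖ :=
        integral_mono_of_nonneg (.of_forall fun _ => abs_nonneg _)
          (integrable_finsetSum _ fun j _ => (hτ_int j).const_mul _) (.of_forall hgap)
    _ = ∑ j, Ψ j * ∫ ω, ‖τ j ω‖ := by
        rw [integral_finsetSum _ fun j _ => (hτ_int j).const_mul _]
        simp only [integral_const_mul]
    _ ≤ ∑ j, Ψ j * (η * T * G) :=
        Finset.sum_le_sum fun j _ => mul_le_mul_of_nonneg_left (hτ_exp j) (hΨ j)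
    _ = (∑ j, Ψ j) * G * η * T := by
        rw [← Finset.sum_mul]
        ring
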